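/- arXiv:0911.3679 — 3 statements merged into one kernel-verified Lean document; each statement's English description precedes it below -/
import Mathlib

section
/- For the affine-linear forms f1(x1,x2) = -2x1 + 3x2 - 6, f2(x1,x2) = 3x1 - 4x2 - 6, f3(x1,x2) = -9x1 + 10x2 - 6, there is no integral point (x1,x2) ∈ Z^2 such that f1(x1,x2), f2(x1,x2), f3(x1,x2) are all (positive) prime numbers. -/
theorem forms_not_all_pos (x1 x2 : ℤ) :
    ¬ (0 < -2 * x1 + 3 * x2 - 6 ∧ 0 < 3 * x1 - 4 * x2 - 6 ∧ 0 < -9 * x1 + 10 * x2 - 6) := by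
  rintro ⟨h1, h2, h3⟩
  -- (6, 7, 1) kills the linear parts, so this combination is the constant -84 < 0.
  have hcomb : 6 * (-2 * x1 + 3 * x2 - 6) + 7 * (3 * x1 - 4 * x2 - 6)
      + (-9 * x1 + 10 * x2 - 6) = -84 := by ring
  linarith

/-- The three forms -2x₁+3x₂-6, 3x₁-4x₂-6, -9x₁+10x₂-6 never simultaneously take
positive prime values. -/
theorem stmt_1 :
    ¬ ∃ x1 x2 : ℤ,
      (0 < -2 * x1 + 3 * x2 - 6 ∧ Prime (-2 * x1 + 3 * x2 - 6)) ∧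
      (0 < 3 * x1 - 4 * x2 - 6 ∧ Prime (3 * x1 - 4 * x2 - 6)) ∧
      (0 < -9 * x1 + 10 * x2 - 6 ∧ Prime (-9 * x1 + 10 * x2 - 6)) := by
  rintro ⟨x1, x2, ⟨h1, -⟩, ⟨h2, -⟩, ⟨h3, -⟩⟩
  exact forms_not_all_pos x1 x2 ⟨h1, h2, h3⟩
end

section
/- Let F = (f1, ..., fm) with fi(x) = a_{i1}x1 + ... + a_{in}xn + bi be an admissible linear polynomial map on Z^n. Then for any positive integer c there exists an integral point x ∈ Z^n such that every prime divisor of ∏_{i=1}^{m} fi(x) is greater than c, and moreover a_{i1}x1 + ... + a_{in}xn > e for each i, where e = max_{1≤j≤m}(|a_{j1}| + ... + |a_{jn}|). -/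
/-!
Apply admissibility with `r = M!`. Every prime dividing `∏ fᵢ(x)` then exceeds `M`, and since
`fᵢ(x) > 1` has some prime factor, also `fᵢ(x) > M`. Taking `M ≥ c` and `M ≥ e + bᵢ` for all `i`
gives both conclusions.
-/

open Nat

theorem Int.lt_of_prime_dvd_of_isCoprime_factorial {z : ℤ} {M p : ℕ} (hp : p.Prime)
    (hdvd : (p : ℤ) ∣ z) (hcop : IsCoprime z (M ! : ℤ)) : M < p := by
  by_contra! hpM
  have hunit : IsUnit (p : ℤ) :=
    hcop.isUnit_of_dvd' hdvd (Int.natCast_dvd_natCast.mpr (Nat.dvd_factorial hp.pos hpM))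
  exact hp.prime.not_isUnit (Int.ofNat_isUnit.mp hunit)

theorem Int.lt_of_isCoprime_factorial {z : ℤ} {M : ℕ} (hz : 1 < z)
    (hcop : IsCoprime z (M ! : ℤ)) : (M : ℤ) < z := by
  lift z to ℕ using by omega
  obtain ⟨p, hp, hpz⟩ := Nat.exists_prime_and_dvd (show z ≠ 1 by omega)
  have hMp := Int.lt_of_prime_dvd_of_isCoprime_factorial hp (Int.natCast_dvd_natCast.mpr hpz) hcop
  have hpz := Nat.le_of_dvd (by omega) hpz
  omega

theorem exists_forall_lt_of_admissible {ι α : Type*} [Fintype ι] (f : ι → α → ℤ)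
    (hadm : ∀ r : ℕ, 0 < r → ∃ x, (∀ i, 1 < f i x) ∧ Int.gcd (∏ i, f i x) r = 1) (M : ℕ) :
    ∃ x, (∀ p : ℕ, p.Prime → (p : ℤ) ∣ ∏ i, f i x → M < p) ∧ ∀ i, (M : ℤ) < f i x := by
  obtain ⟨x, hgt, hgcd⟩ := hadm M ! M.factorial_pos
  have hcop : IsCoprime (∏ i, f i x) (M ! : ℤ) := Int.isCoprime_iff_gcd_eq_one.mpr hgcd
  refine ⟨x, fun p hp hdvd => Int.lt_of_prime_dvd_of_isCoprime_factorial hp hdvd hcop,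
    fun i => Int.lt_of_isCoprime_factorial (hgt i) ?_⟩
  exact IsCoprime.prod_left_iff.mp hcop i (Finset.mem_univ i)

open Finset in
theorem stmt_5_general (m n : ℕ) (hm : 0 < m) (a : Fin m → Fin n → ℤ) (b : Fin m → ℤ)
    (hadm : ∀ r : ℕ, 0 < r → ∃ x : Fin n → ℤ,
      (∀ i, 1 < ∑ j, a i j * x j + b i) ∧
      Int.gcd (∏ i, (∑ j, a i j * x j + b i)) r = 1)
    (c : ℕ) :
    ∃ x : Fin n → ℤ,
      (∀ p : ℕ, p.Prime → (p : ℤ) ∣ ∏ i, (∑ j, a i j * x j + b i) → c < p) ∧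
      ∀ i, (Finset.univ.sup' ⟨⟨0, hm⟩, Finset.mem_univ _⟩ fun j => ∑ k, |a j k|) <
        ∑ j, a i j * x j := by
  set e := Finset.univ.sup' ⟨⟨0, hm⟩, Finset.mem_univ _⟩ fun j => ∑ k, |a j k|
  obtain ⟨B, hB⟩ := Finite.exists_le fun i => e + b i
  obtain ⟨x, hprime, hval⟩ := exists_forall_lt_of_admissible
    (fun i (x : Fin n → ℤ) => ∑ j, a i j * x j + b i) hadm (max c B.toNat)
  refine ⟨x, fun p hp hdvd => (le_max_left _ _).trans_lt (hprime p hp hdvd), fun i => ?_⟩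
  have hBi := hB i
  have hvi := hval i
  omega

open Finset in
/-- Lemma 1: if fᵢ(x) = ∑ⱼ aᵢⱼ xⱼ + bᵢ is an admissible linear map, then for every
positive integer c there is an integral point x whose values have all prime divisors
greater than c, with each linear part exceeding e = maxⱼ ∑ₖ |aⱼₖ|. -/
theorem stmt_5 (m n : ℕ) (hm : 0 < m) (a : Fin m → Fin n → ℤ) (b : Fin m → ℤ)
    (hadm : ∀ r : ℕ, 0 < r → ∃ x : Fin n → ℤ,
      (∀ i, 1 < ∑ j, a i j * x j + b i) ∧
      Int.gcd (∏ i, (∑ j, a i j * x j + b i)) r = 1)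
    (c : ℕ) (hc : 0 < c) :
    ∃ x : Fin n → ℤ,
      (∀ p : ℕ, p.Prime → (p : ℤ) ∣ ∏ i, (∑ j, a i j * x j + b i) → c < p) ∧
      ∀ i, (Finset.univ.sup' ⟨⟨0, hm⟩, Finset.mem_univ _⟩ fun j => ∑ k, |a j k|) <
        ∑ j, a i j * x j :=
  stmt_5_general m n hm a b hadm c
end

section
/- If a linear polynomial map F = (f1, ..., fm) on Z^n (fi affine-linear with integer coefficients) is admissible, then F is strongly admissible. -/
/-!
Admissibility at `r = B!`, for `B` bounding `F` at some point `x₁`, gives a point `x₂` at which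
every `fᵢ` exceeds `B`, so along `v = x₂ - x₁` every linear part `(a *ᵥ v) i` is positive.
Given `k`, choose a level `T ≈ log₂₅₆ k`, take a point `y` with entries in `[-q, q]` at which `F`
is coprime to `q = T#` (an admissible point reduced mod `q`), and move to `x = y + q u v` with `u`
in an interval of length `T + 1`. Since `fᵢ(x) ≡ fᵢ(y) (mod q)`, no prime `≤ T` divides `fᵢ(x)`.
As `(T + 1) ^ s ≤ k` for the number `s` of prime factors `p > T` of `k`, there are fewer than
`(T + 1) / m` of them, and each divides a given `fᵢ(x)` for at most one `u` of the interval; so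
some `u` avoids them all, and then `1 < fᵢ(x) ≤ 4 ^ T · O(T) ≤ k`.
-/

open Finset Filter Matrix

theorem lt_of_isCoprime_factorial {z : ℤ} {B : ℕ} (hz : 1 < z)
    (h : IsCoprime z (B.factorial : ℤ)) : (B : ℤ) < z := by
  by_contra! hzB
  lift z to ℕ using by omega
  have hdvd : (z : ℤ) ∣ (B.factorial : ℤ) :=
    Int.natCast_dvd_natCast.2 (Nat.dvd_factorial (by omega) (by exact_mod_cast hzB))
  have := Int.isUnit_iff.1 (h.isUnit_of_dvd' dvd_rfl hdvd)
  omega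

theorem card_filter_dvd_add_mul_le_one {p : ℕ} (hp : p.Prime) {β : ℤ} (hβ : ¬ (p : ℤ) ∣ β)
    (α u₀ : ℤ) {L : ℕ} (hL : L ≤ p) : #{u ∈ Ico u₀ (u₀ + L) | (p : ℤ) ∣ α + β * u} ≤ 1 := by
  refine card_le_one.2 fun u hu u' hu' => ?_
  simp only [mem_filter, mem_Ico] at hu hu'
  have hdvd : (p : ℤ) ∣ β * (u - u') := by
    simpa [mul_sub] using dvd_sub hu.2 hu'.2
  have := Int.eq_zero_of_abs_lt_dvd
    (((Nat.prime_iff_prime_int.1 hp).dvd_or_dvd hdvd).resolve_left hβ) (by rw [abs_lt]; omega)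
  omega

theorem exists_mem_Ico_forall_not_dvd {ι : Type*} [Fintype ι] (α β : ι → ℤ) (P : Finset ℕ)
    (u₀ : ℤ) (L : ℕ) (hP : ∀ p ∈ P, p.Prime ∧ L ≤ p) (hβ : ∀ p ∈ P, ∀ i, ¬ (p : ℤ) ∣ β i)
    (hcard : #P * Fintype.card ι < L) :
    ∃ u ∈ Ico u₀ (u₀ + L), ∀ p ∈ P, ∀ i, ¬ (p : ℤ) ∣ α i + β i * u := by
  by_contra! hbad
  have hcover : Ico u₀ (u₀ + L) ⊆ (P ×ˢ univ).biUnion fun pi : ℕ × ι =>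
      {u ∈ Ico u₀ (u₀ + L) | (pi.1 : ℤ) ∣ α pi.2 + β pi.2 * u} := by
    intro u hu
    obtain ⟨p, hp, i, hi⟩ := hbad u hu
    exact mem_biUnion.2 ⟨(p, i), mem_product.2 ⟨hp, mem_univ i⟩, mem_filter.2 ⟨hu, hi⟩⟩
  have := (card_le_card hcover).trans (card_biUnion_le_card_mul _ _ 1 fun pi hpi => by
    obtain ⟨hp, -⟩ := mem_product.1 hpi
    exact card_filter_dvd_add_mul_le_one (hP _ hp).1 (hβ _ hp _) _ _ (hP _ hp).2)
  simp [card_product] at this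
  omega

theorem pow_card_filter_primeFactors_le {k : ℕ} (hk : k ≠ 0) (T : ℕ) :
    (T + 1) ^ #{p ∈ k.primeFactors | T < p} ≤ k :=
  calc (T + 1) ^ #{p ∈ k.primeFactors | T < p}
      ≤ ∏ p ∈ k.primeFactors with T < p, p :=
        pow_card_le_prod _ _ _ fun _ hp => (mem_filter.1 hp).2
    _ ≤ ∏ p ∈ k.primeFactors, p := prod_le_prod_of_subset_of_one_le' (filter_subset _ _)
        fun _ hp _ => (Nat.prime_of_mem_primeFactors hp).one_lt.le
    _ ≤ k := Nat.le_of_dvd (Nat.pos_of_ne_zero hk) (Nat.prod_primeFactors_dvd k)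

theorem Nat.Prime.not_dvd_primorial_mul {p T : ℕ} (hp : p.Prime) (hTp : T < p) {c : ℤ}
    (hc : 0 < c) (hcT : c ≤ T) : ¬ (p : ℤ) ∣ primorial T * c := by
  intro hdvd
  rcases (Nat.prime_iff_prime_int.1 hp).dvd_or_dvd hdvd with hpq | hpc
  · have := hp.dvd_primorial_iff.1 (Int.natCast_dvd_natCast.1 hpq)
    omega
  · have := Int.le_of_dvd hc hpc
    omega

theorem isCoprime_of_isCoprime_primorial {z : ℤ} {k T : ℕ} (hk : k ≠ 0)
    (hz : IsCoprime z (primorial T : ℤ)) (hlarge : ∀ p ∈ k.primeFactors, T < p → ¬ (p : ℤ) ∣ z) :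
    IsCoprime z k := by
  rw [Int.isCoprime_iff_gcd_eq_one]
  refine Nat.Coprime.symm (Nat.coprime_of_dvd fun p hp hpk hpz => ?_)
  rw [← Int.natCast_dvd] at hpz
  rcases le_or_gt p T with hpT | hpT
  · have hpq : (p : ℤ) ∣ (primorial T : ℤ) :=
      Int.natCast_dvd_natCast.2 (hp.dvd_primorial_iff.2 hpT)
    exact hp.one_lt.ne' (by simpa using Int.isUnit_iff_natAbs_eq.1 (hz.isUnit_of_dvd' hpz hpq))
  · exact hlarge p (Nat.mem_primeFactors.2 ⟨hp, hpk, hk⟩) hpT hpz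

theorem eventually_exists_sieveLevel (m K : ℕ) : ∀ᶠ k in atTop, ∃ T, K ≤ T ∧
    4 ^ T * K * (T + 1) ≤ k ∧ ∀ s, (T + 1) ^ s ≤ k → m * s ≤ T := by
  filter_upwards [eventually_ge_atTop (256 ^ (K + 256 ^ m))] with k hk
  have hk0 : k ≠ 0 := (lt_of_lt_of_le (by positivity) hk).ne'
  set T := Nat.log 256 k
  have hT : K + 256 ^ m ≤ T := Nat.le_log_of_pow_le (by norm_num) hk
  have hKT : K ≤ T := (Nat.le_add_right K _).trans hT
  refine ⟨T, hKT, ?_, fun s hs => ?_⟩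
  · calc 4 ^ T * K * (T + 1) ≤ 4 ^ T * 8 ^ T * 8 ^ T := by
          gcongr
          · exact hKT.trans (Nat.lt_pow_self (by norm_num)).le
          · exact Nat.lt_pow_self (by norm_num)
      _ = 256 ^ T := by rw [← mul_pow, ← mul_pow]; norm_num
      _ ≤ k := Nat.pow_log_le_self 256 hk0
  · have : 256 ^ (m * s) < 256 ^ (T + 1) :=
      calc 256 ^ (m * s) = (256 ^ m) ^ s := pow_mul _ _ _
        _ ≤ (T + 1) ^ s :=
          Nat.pow_le_pow_left ((Nat.le_add_left _ K).trans (hT.trans T.le_succ)) s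
        _ ≤ k := hs
        _ < 256 ^ (T + 1) := Nat.lt_pow_succ_log_self (by norm_num) k
    have := (Nat.pow_lt_pow_iff_right (by norm_num)).1 this
    omega

theorem one_lt_add_mul_mul_and_le {e c u : ℤ} {q A W L : ℕ} (hq : 1 ≤ q) (he : |e| ≤ A * q)
    (hc : 1 ≤ c) (hcW : c ≤ W) (hu : A + 2 ≤ u) (huL : u < A + 2 + L) :
    1 < e + q * c * u ∧ e + q * c * u ≤ q * ((A + 2) * (W + 1)) * L := by
  obtain ⟨he₁, he₂⟩ := abs_le.1 he
  have hq' : (1 : ℤ) ≤ q := by exact_mod_cast hq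
  have hA := Int.natCast_nonneg A
  have hW := Int.natCast_nonneg W
  have hL : (1 : ℤ) ≤ L := by omega
  constructor
  · have : (q : ℤ) * 1 * (A + 2) ≤ q * c * u := by gcongr
    nlinarith
  · have : (q : ℤ) * c * u ≤ q * W * (A + 1 + L) := by gcongr <;> omega
    have hAWL : (A : ℤ) + W * (A + 1 + L) ≤ (A + 2) * (W + 1) * L := by
      nlinarith [mul_nonneg (mul_nonneg hA hW) (sub_nonneg.2 hL), mul_nonneg hA (sub_nonneg.2 hL),
        mul_nonneg hW (sub_nonneg.2 hL)]
    nlinarith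

section

variable {ι κ : Type*} [Fintype ι] [Fintype κ] (a : Matrix ι κ ℤ) (b : ι → ℤ)

def Admissible : Prop :=
  ∀ r : ℕ, 0 < r → ∃ x : κ → ℤ, (∀ i, 1 < (a *ᵥ x + b) i) ∧ Int.gcd (∏ i, (a *ᵥ x + b) i) r = 1

def StronglyAdmissible : Prop :=
  ∃ C : ℕ, 0 < C ∧ ∀ k : ℕ, C ≤ k → ∃ x : κ → ℤ,
    ∀ i, 1 < (a *ᵥ x + b) i ∧ (a *ᵥ x + b) i ≤ k ∧ Int.gcd ((a *ᵥ x + b) i) k = 1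

theorem exists_abs_mulVec_add_le :
    ∃ A : ℕ, ∀ (q : ℕ) (y : κ → ℤ), 1 ≤ q → (∀ j, |y j| ≤ q) → ∀ i, |(a *ᵥ y + b) i| ≤ A * q := by
  obtain ⟨A, hA⟩ := Finite.exists_le fun i => (∑ j, |a i j| + |b i|).toNat
  refine ⟨A, fun q y hq hy i => ?_⟩
  have hq' : (1 : ℤ) ≤ q := by exact_mod_cast hq
  have hAi : ∑ j, |a i j| + |b i| ≤ A := (Int.self_le_toNat _).trans (by exact_mod_cast hA i)
  have hsum : |(a *ᵥ y) i| ≤ (∑ j, |a i j|) * q := by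
    rw [sum_mul]
    refine (abs_sum_le_sum_abs _ _).trans (sum_le_sum fun j _ => ?_)
    rw [abs_mul]
    exact mul_le_mul_of_nonneg_left (hy j) (abs_nonneg _)
  calc |(a *ᵥ y + b) i| ≤ |(a *ᵥ y) i| + |b i| := abs_add_le _ _
    _ ≤ (∑ j, |a i j| + |b i|) * q := by nlinarith [abs_nonneg (b i)]
    _ ≤ A * q := by gcongr

variable {a b}

theorem Admissible.exists_isCoprime (h : Admissible a b) {r : ℕ} (hr : 0 < r) :
    ∃ x : κ → ℤ, (∀ i, 1 < (a *ᵥ x + b) i) ∧ ∀ i, IsCoprime ((a *ᵥ x + b) i) r := by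
  obtain ⟨x, hx, hgcd⟩ := h r hr
  rw [← Int.isCoprime_iff_gcd_eq_one, IsCoprime.prod_left_iff] at hgcd
  exact ⟨x, hx, fun i => hgcd i (mem_univ i)⟩

theorem Admissible.exists_one_le_mulVec (h : Admissible a b) :
    ∃ v : κ → ℤ, ∀ i, 1 ≤ (a *ᵥ v) i := by
  obtain ⟨x₁, -, -⟩ := h.exists_isCoprime one_pos
  obtain ⟨B, hB⟩ := Finite.exists_le fun i => ((a *ᵥ x₁ + b) i).toNat
  obtain ⟨x₂, hx₂, hcop⟩ := h.exists_isCoprime B.factorial_pos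
  refine ⟨x₂ - x₁, fun i => ?_⟩
  have h₁ : (a *ᵥ x₁ + b) i ≤ B := (Int.self_le_toNat _).trans (by exact_mod_cast hB i)
  have h₂ := lt_of_isCoprime_factorial (hx₂ i) (hcop i)
  simp only [mulVec_sub, Pi.sub_apply, Pi.add_apply] at h₁ h₂ ⊢
  omega

theorem Admissible.exists_abs_le_isCoprime (h : Admissible a b) {q : ℕ} (hq : 0 < q) :
    ∃ y : κ → ℤ, (∀ j, |y j| ≤ q) ∧ ∀ i, IsCoprime ((a *ᵥ y + b) i) q := by
  obtain ⟨x, -, hx⟩ := h.exists_isCoprime hq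
  refine ⟨fun j => x j % q, fun j => ?_, fun i => ?_⟩
  · have := Int.emod_nonneg (x j) (b := q) (by omega)
    have := Int.emod_lt_of_pos (x j) (b := q) (by omega)
    rw [abs_le]; constructor <;> simp only <;> omega
  · have hx' : x = (fun j => x j % q) + (q : ℤ) • fun j => x j / q := by
      ext j; simp [Int.emod_add_mul_ediv]
    rw [hx', mulVec_add, mulVec_smul, add_right_comm] at hx
    simpa using hx i

theorem Admissible.exists_isCoprime_of_sieveLevel (h : Admissible a b) {v : κ → ℤ}
    (hv : ∀ i, 1 ≤ (a *ᵥ v) i) {A W : ℕ}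
    (hA : ∀ (q : ℕ) (y : κ → ℤ), 1 ≤ q → (∀ j, |y j| ≤ q) → ∀ i, |(a *ᵥ y + b) i| ≤ A * q)
    (hW : ∀ i, (a *ᵥ v) i ≤ W) {k T : ℕ} (hWT : W ≤ T)
    (hk : 4 ^ T * ((A + 2) * (W + 1)) * (T + 1) ≤ k)
    (hs : ∀ s, (T + 1) ^ s ≤ k → Fintype.card ι * s ≤ T) :
    ∃ x : κ → ℤ, ∀ i, 1 < (a *ᵥ x + b) i ∧ (a *ᵥ x + b) i ≤ k ∧
      IsCoprime ((a *ᵥ x + b) i) k := by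
  set q := primorial T
  have hq : 0 < q := primorial_pos T
  have hk0 : k ≠ 0 := (lt_of_lt_of_le (by positivity) hk).ne'
  obtain ⟨y, hy, hcop⟩ := h.exists_abs_le_isCoprime hq
  set P := {p ∈ k.primeFactors | T < p}
  have hP : ∀ p ∈ P, p.Prime ∧ T + 1 ≤ p := fun p hp =>
    ⟨Nat.prime_of_mem_primeFactors (mem_filter.1 hp).1, (mem_filter.1 hp).2⟩
  have hβ : ∀ p ∈ P, ∀ i, ¬ (p : ℤ) ∣ q * (a *ᵥ v) i := fun p hp i =>
    (hP p hp).1.not_dvd_primorial_mul (hP p hp).2 (by linarith [hv i])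
      ((hW i).trans (by exact_mod_cast hWT))
  have hcard : #P * Fintype.card ι < T + 1 := by
    have := hs #P (pow_card_filter_primeFactors_le hk0 T)
    rw [mul_comm]; omega
  obtain ⟨u, hu, hndvd⟩ := exists_mem_Ico_forall_not_dvd _ _ P (A + 2) (T + 1) hP hβ hcard
  rw [mem_Ico] at hu
  refine ⟨y + (q * u) • v, fun i => ?_⟩
  have hx : (a *ᵥ (y + (q * u) • v) + b) i = (a *ᵥ y + b) i + q * (a *ᵥ v) i * u := by
    simp only [mulVec_add, mulVec_smul, Pi.add_apply, Pi.smul_apply, smul_eq_mul]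
    ring
  obtain ⟨hlow, hup⟩ := one_lt_add_mul_mul_and_le hq (hA q y hq hy i) (hv i) (hW i) hu.1 hu.2
  have hqk : q * ((A + 2) * (W + 1)) * (T + 1) ≤ k :=
    le_trans (by gcongr; exact primorial_le_four_pow T) hk
  rw [hx]
  refine ⟨hlow, hup.trans (by exact_mod_cast hqk), isCoprime_of_isCoprime_primorial hk0 ?_
    fun p hp hpT => hndvd p (mem_filter.2 ⟨hp, hpT⟩) i⟩
  rw [mul_assoc]
  exact (hcop i).add_mul_left_left _

theorem Admissible.stronglyAdmissible (h : Admissible a b) : StronglyAdmissible a b := by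
  obtain ⟨v, hv⟩ := h.exists_one_le_mulVec
  obtain ⟨A, hA⟩ := exists_abs_mulVec_add_le a b
  obtain ⟨W, hW⟩ := Finite.exists_le fun i => ((a *ᵥ v) i).toNat
  obtain ⟨C, hC⟩ := eventually_atTop.1
    (eventually_exists_sieveLevel (Fintype.card ι) ((A + 2) * (W + 1)))
  refine ⟨C + 1, C.succ_pos, fun k hk => ?_⟩
  obtain ⟨T, hKT, hk, hs⟩ := hC k (by omega)
  obtain ⟨x, hx⟩ := h.exists_isCoprime_of_sieveLevel hv hA
    (fun i => (Int.self_le_toNat _).trans (by exact_mod_cast hW i)) (by nlinarith) hk hs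
  exact ⟨x, fun i => ⟨(hx i).1, (hx i).2.1, Int.isCoprime_iff_gcd_eq_one.1 (hx i).2.2⟩⟩

end

/-- An admissible linear polynomial map on ℤⁿ is strongly admissible (main content of
Theorem 1). -/
theorem stmt_7 (m n : ℕ) (a : Fin m → Fin n → ℤ) (b : Fin m → ℤ)
    (hadm : ∀ r : ℕ, 0 < r → ∃ x : Fin n → ℤ,
      (∀ i, 1 < ∑ j, a i j * x j + b i) ∧
      Int.gcd (∏ i, (∑ j, a i j * x j + b i)) r = 1) :
    ∃ C : ℕ, 0 < C ∧ ∀ k : ℕ, C ≤ k → ∃ x : Fin n → ℤ,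
      ∀ i, 1 < ∑ j, a i j * x j + b i ∧ (∑ j, a i j * x j + b i) ≤ (k : ℤ) ∧
        Int.gcd (∑ j, a i j * x j + b i) k = 1 :=
  Admissible.stronglyAdmissible (a := a) (b := b) hadm
end
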